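/- Every hypergraph that admits a disjoint branches decomposition is β-acyclic, i.e., every subhypergraph of it is α-acyclic. -/

import Mathlib

/-!
Root the join tree of the disjoint branches decomposition and order its nodes by ancestry. This is
a forest order: the ancestors of a node form a chain. The join tree property makes the edges
through a vertex `v` convex in this order, and the disjoint branches property makes them a chain.
Both properties pass to a subhypergraph, each of whose edges is the trace `g ∩ V'` of an edge `g`.
A finite forest order in which every such vertex set is a convex chain has a join tree: join each
node to its immediate predecessor, and each minimal node to one fixed minimal node.
-/

variable {V : Type} [DecidableEq V]

/-- A join tree of a hypergraph with edge set `E`: a tree on node set `E` such that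
for every vertex `v`, the edges containing `v` induce a connected subtree. -/
structure JoinTreeOf (E : Finset (Finset V)) where
  T : SimpleGraph {f // f ∈ E}
  isTree : T.IsTree
  conn : ∀ v : V, (T.induce {f : {f // f ∈ E} | v ∈ f.1}).Preconnected

/-- `x` lies on the (unique) path from `r` to `y` in `G`. -/
def onTreePath {α : Type} (G : SimpleGraph α) (r y x : α) : Prop :=
  ∀ p : G.Walk r y, p.IsPath → x ∈ p.support

/-- A disjoint branches decomposition of the hypergraph with edge set `E`, rooted at `root`:
a join tree rooted at `root` in which any two edges on different branches
(neither an ancestor of the other) are disjoint. -/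
structure DBD (E : Finset (Finset V)) (root : Finset V) where
  J : JoinTreeOf E
  rootMem : root ∈ E
  disj : ∀ a b : {f // f ∈ E}, a ≠ b →
    ¬ onTreePath J.T ⟨root, rootMem⟩ b a →
    ¬ onTreePath J.T ⟨root, rootMem⟩ a b →
    a.1 ∩ b.1 = ∅

/-- `H` is db-rootable in `e`. -/
def DbRootable (E : Finset (Finset V)) (e : Finset V) : Prop := Nonempty (DBD E e)

/-- Two hyperedges are linked by a path of pairwise-intersecting edges of `E`. -/
def edgeLinked (E : Finset (Finset V)) (a b : Finset V) : Prop :=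
  Relation.ReflTransGen (fun x y => x ∈ E ∧ y ∈ E ∧ (x ∩ y).Nonempty) a b

open Classical in
/-- The connected component (as a set of edges) of the edge `e` in the hypergraph `E`. -/
noncomputable def component (E : Finset (Finset V)) (e : Finset V) : Finset (Finset V) :=
  E.filter (edgeLinked E e)

/-- `C` is (the edge set of) a connected component of the hypergraph with edge set `E`. -/
def IsComponent (E C : Finset (Finset V)) : Prop := ∃ e ∈ E, C = component E e

/-- The hypergraph with edge set `E` is connected. -/
def HGConnected (E : Finset (Finset V)) : Prop := ∀ a ∈ E, ∀ b ∈ E, edgeLinked E a b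

/-- Vertices `u` and `w` are connected by a path of edges in `E`. -/
def vtxLinked (E : Finset (Finset V)) (u w : V) : Prop :=
  Relation.ReflTransGen (fun x y => ∃ f ∈ E, x ∈ f ∧ y ∈ f) u w

/-- The hypergraph has a join path: a join tree whose underlying tree is a path
(every node has at most two neighbours). -/
def HasJoinPath (E : Finset (Finset V)) : Prop :=
  ∃ J : JoinTreeOf E, ∀ f : {f // f ∈ E}, (J.T.neighborSet f).ncard ≤ 2

/-- A hypergraph is α-acyclic if it has a join tree. -/
def AlphaAcyclic (E : Finset (Finset V)) : Prop := E = ∅ ∨ Nonempty (JoinTreeOf E)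

open SimpleGraph

section RootedTree

variable {α : Type} {G : SimpleGraph α}

theorem SimpleGraph.IsAcyclic.eq_of_isPath (hG : G.IsAcyclic) {u v : α} {p q : G.Walk u v}
    (hp : p.IsPath) (hq : q.IsPath) : p = q :=
  congrArg Subtype.val ((hG.subsingleton_path u v).elim ⟨p, hp⟩ ⟨q, hq⟩)

theorem SimpleGraph.IsAcyclic.mem_of_preconnected (hG : G.IsAcyclic) {S : Set α}
    (hS : (G.induce S).Preconnected) {a b : α} (ha : a ∈ S) (hb : b ∈ S) {p : G.Walk a b}
    (hp : p.IsPath) {c : α} (hc : c ∈ p.support) : c ∈ S := by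
  classical
  obtain ⟨w⟩ := hS ⟨a, ha⟩ ⟨b, hb⟩
  let w' : G.Walk a b := w.map (Embedding.induce S).toHom
  rw [← hG.eq_of_isPath w'.bypass_isPath hp] at hc
  obtain ⟨x, -, rfl⟩ :=
    List.mem_map.mp (Walk.support_map _ _ ▸ w'.support_bypass_subset_support hc)
  exact x.2

theorem onTreePath_iff_mem_support (hG : G.IsAcyclic) {r y x : α} {p : G.Walk r y}
    (hp : p.IsPath) : onTreePath G r y x ↔ x ∈ p.support :=
  ⟨fun h => h p hp, fun hx _ hq => hG.eq_of_isPath hq hp ▸ hx⟩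

theorem onTreePath_refl (G : SimpleGraph α) (r y : α) : onTreePath G r y y :=
  fun p _ => p.end_mem_support

theorem onTreePath_trans {r x y z : α} (hxy : onTreePath G r y x) (hyz : onTreePath G r z y) :
    onTreePath G r z x := by
  classical
  exact fun p hp => p.support_takeUntil_subset_support (hyz p hp) (hxy _ (hp.takeUntil _))

theorem onTreePath_antisymm (hG : G.IsTree) {r a b : α} (hab : onTreePath G r b a)
    (hba : onTreePath G r a b) : a = b := by
  classical
  obtain ⟨p, hp, -⟩ := hG.existsUnique_path r b
  have ha := hab p hp
  have hb := hba _ (hp.takeUntil ha)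
  have hq : (p.takeUntil a ha).takeUntil b hb = p :=
    hG.isAcyclic.eq_of_isPath ((hp.takeUntil ha).takeUntil hb) hp
  by_contra hne
  have := Walk.length_takeUntil_lt_length ha hne
  have := Walk.length_takeUntil_le_length (p.takeUntil a ha) hb
  rw [hq] at this
  omega

theorem onTreePath_total (hG : G.IsTree) {r a b c : α} (ha : onTreePath G r c a)
    (hb : onTreePath G r c b) : onTreePath G r b a ∨ onTreePath G r a b := by
  classical
  obtain ⟨p, hp, -⟩ := hG.existsUnique_path r c
  rcases List.prefix_or_prefix_of_prefix (p.support_takeUntil_prefix_support (ha p hp))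
    (p.support_takeUntil_prefix_support (hb p hp)) with h | h
  · left
    rw [onTreePath_iff_mem_support hG.isAcyclic (hp.takeUntil _)]
    exact h.subset (Walk.end_mem_support _)
  · right
    rw [onTreePath_iff_mem_support hG.isAcyclic (hp.takeUntil _)]
    exact h.subset (Walk.end_mem_support _)

theorem mem_of_onTreePath_of_preconnected (hG : G.IsTree) {S : Set α}
    (hS : (G.induce S).Preconnected) {r a b c : α} (ha : a ∈ S) (hb : b ∈ S)
    (hac : onTreePath G r c a) (hcb : onTreePath G r b c) : c ∈ S := by
  classical
  obtain ⟨p, hp, -⟩ := hG.existsUnique_path r b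
  have hap : a ∈ p.support := onTreePath_trans hac hcb p hp
  have hcp : c ∈ p.support := hcb p hp
  rw [← p.take_spec hap, Walk.mem_support_append_iff] at hcp
  rcases hcp with hc | hc
  · have hca : onTreePath G r a c :=
      (onTreePath_iff_mem_support hG.isAcyclic (hp.takeUntil hap)).2 hc
    exact onTreePath_antisymm hG hca hac ▸ ha
  · exact hG.isAcyclic.mem_of_preconnected hS ha hb (hp.dropUntil hap) hc

/-- `a ≤ b` when `a` lies on the path from the root `r` to `b`. -/
abbrev SimpleGraph.IsTree.rootedOrder (hG : G.IsTree) (r : α) : PartialOrder α where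
  le a b := onTreePath G r b a
  le_refl a := onTreePath_refl G r a
  le_trans _ _ _ := onTreePath_trans
  le_antisymm _ _ := onTreePath_antisymm hG

end RootedTree

theorem SimpleGraph.isTree_fromRel_of_reachable {β : Type*} [Finite β] (f : β → β) (r : β)
    (hr : f r = r) (hreach : ∀ b, (fromRel (f · = ·)).Reachable b r) :
    (fromRel (f · = ·)).IsTree := by
  classical
  have := Fintype.ofFinite β
  have : Nonempty β := ⟨r⟩
  have hconn : (fromRel (f · = ·)).Connected := ⟨fun a b => (hreach a).trans (hreach b).symm⟩
  have hedges :
      (fromRel (f · = ·)).edgeFinset ⊆ (Finset.univ.erase r).image fun b => s(b, f b) := by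
    intro e he
    induction e using Sym2.ind with
    | _ a b =>
      simp only [mem_edgeFinset, mem_edgeSet, fromRel_adj] at he
      simp only [Finset.mem_image, Finset.mem_erase, Finset.mem_univ, and_true]
      rcases he with ⟨hab, rfl | rfl⟩
      · exact ⟨a, fun h => hab (h ▸ hr.symm), rfl⟩
      · exact ⟨b, fun h => hab (h ▸ hr), Sym2.eq_swap⟩
  rw [isTree_iff_connected_and_card]
  refine ⟨hconn, le_antisymm ?_ hconn.card_vert_le_card_edgeSet_add_one⟩
  have := (Finset.card_le_card hedges).trans Finset.card_image_le
  rw [Finset.card_erase_of_mem (Finset.mem_univ r), Finset.card_univ, edgeFinset_card] at this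
  have := Fintype.card_pos_iff.mpr ⟨r⟩
  rw [Nat.card_eq_fintype_card, Nat.card_eq_fintype_card]
  omega

section TreeOrder

variable {β : Type*} [PartialOrder β]

theorem exists_isGreatest_Iio_of_isChain_Iic [Finite β]
    (hIic : ∀ b : β, IsChain (· ≤ ·) (Set.Iic b)) {b : β} (hb : (Set.Iio b).Nonempty) :
    ∃ p, IsGreatest (Set.Iio b) p := by
  obtain ⟨p, hp⟩ := (Set.toFinite _).exists_maximal hb
  refine ⟨p, hp.prop, fun a ha => ?_⟩
  rcases (hIic b).total (Set.mem_Iic.2 ha.le) (Set.mem_Iic.2 hp.prop.le) with h | h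
  · exact h
  · exact (hp.eq_of_le ha h).ge

variable [WellFoundedLT β] {f : β → β}

theorem reachable_fromRel_of_isGreatest_Iio
    (hf : ∀ b, (Set.Iio b).Nonempty → IsGreatest (Set.Iio b) (f b)) {r : β}
    (hmin : ∀ b, Set.Iio b = ∅ → f b = r) (b : β) : (fromRel (f · = ·)).Reachable b r := by
  induction b using WellFoundedLT.induction with
  | _ b ih =>
    rcases (Set.Iio b).eq_empty_or_nonempty with h | h
    · rcases eq_or_ne b r with rfl | hbr
      · rfl
      · exact (show (fromRel (f · = ·)).Adj b r from ⟨hbr, Or.inl (hmin b h)⟩).reachable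
    · have hfb := (hf b h).1
      exact (show (fromRel (f · = ·)).Adj b (f b) from ⟨hfb.ne', Or.inl rfl⟩).reachable.trans
        (ih _ hfb)

theorem preconnected_induce_fromRel_of_isGreatest_Iio
    (hf : ∀ b, (Set.Iio b).Nonempty → IsGreatest (Set.Iio b) (f b)) {S : Set β}
    (hS : S.OrdConnected) (hSchain : IsChain (· ≤ ·) S) :
    ((fromRel (f · = ·)).induce S).Preconnected := by
  have key : ∀ y (hy : y ∈ S) x (hx : x ∈ S), x ≤ y →
      ((fromRel (f · = ·)).induce S).Reachable ⟨x, hx⟩ ⟨y, hy⟩ := by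
    intro y
    induction y using WellFoundedLT.induction with
    | _ y ih =>
      intro hy x hx hxy
      rcases hxy.eq_or_lt with rfl | hxy
      · rfl
      obtain ⟨hfy, hxf⟩ := hf y ⟨x, hxy⟩
      have hfS : f y ∈ S := hS.out hx hy ⟨hxf hxy, hfy.le⟩
      have hadj : ((fromRel (f · = ·)).induce S).Adj ⟨f y, hfS⟩ ⟨y, hy⟩ :=
        ⟨hfy.ne, Or.inr rfl⟩
      exact (ih _ hfy hfS x hx (hxf hxy)).trans hadj.reachable
  rintro ⟨x, hx⟩ ⟨y, hy⟩
  rcases eq_or_ne x y with rfl | hne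
  · rfl
  rcases hSchain hx hy hne with h | h
  · exact key y hy x hx h
  · exact (key x hx y hy h).symm

end TreeOrder

theorem exists_isTree_forall_preconnected_induce {β ι : Type*} [PartialOrder β] [Finite β]
    [Nonempty β] (hIic : ∀ b : β, IsChain (· ≤ ·) (Set.Iic b)) (S : ι → Set β)
    (hS : ∀ i, (S i).OrdConnected) (hSchain : ∀ i, IsChain (· ≤ ·) (S i)) :
    ∃ T : SimpleGraph β, T.IsTree ∧ ∀ i, (T.induce (S i)).Preconnected := by
  classical
  obtain ⟨r, -, hr⟩ := Set.finite_univ.exists_minimal (Set.univ_nonempty (α := β))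
  choose! pred hpred using fun b (hb : (Set.Iio b).Nonempty) =>
    exists_isGreatest_Iio_of_isChain_Iic hIic hb
  let f b := if (Set.Iio b).Nonempty then pred b else r
  have hf : ∀ b, (Set.Iio b).Nonempty → IsGreatest (Set.Iio b) (f b) := fun b hb => by
    simpa only [f, if_pos hb] using hpred b hb
  have hmin : ∀ b, Set.Iio b = ∅ → f b = r := fun b hb => by
    simp only [f, hb, Set.not_nonempty_empty, if_false]
  have hIio_r : Set.Iio r = ∅ :=
    Set.eq_empty_of_forall_notMem fun b hb => hb.not_ge (hr trivial hb.le)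
  exact ⟨_, isTree_fromRel_of_reachable f r (hmin r hIio_r)
    (reachable_fromRel_of_isGreatest_Iio hf hmin),
    fun i => preconnected_induce_fromRel_of_isGreatest_Iio hf (hS i) (hSchain i)⟩

theorem exists_isTree_of_onTreePath {α β ι : Type} [Finite β] [Nonempty β] {G : SimpleGraph α}
    (hG : G.IsTree) (r : α) {g : β → α} (hg : g.Injective) (S : ι → Set β)
    (hconv : ∀ i x y c, x ∈ S i → y ∈ S i →
      onTreePath G r (g c) (g x) → onTreePath G r (g y) (g c) → c ∈ S i)
    (hchain : ∀ i x y, x ∈ S i → y ∈ S i →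
      onTreePath G r (g y) (g x) ∨ onTreePath G r (g x) (g y)) :
    ∃ T : SimpleGraph β, T.IsTree ∧ ∀ i, (T.induce (S i)).Preconnected := by
  let _ := hG.rootedOrder r
  let _ : PartialOrder β := PartialOrder.lift g hg
  have hIic (b : β) : IsChain (· ≤ ·) (Set.Iic b) := fun x hx y hy _ =>
    onTreePath_total (r := r) (a := g x) (b := g y) (c := g b) hG hx hy
  exact exists_isTree_forall_preconnected_induce hIic S
    (fun i => ⟨fun x hx y hy c hc => hconv i x y c hx hy hc.1 hc.2⟩)
    (fun i x hx y hy _ => hchain i x y hx hy)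

theorem DBD.onTreePath_or_onTreePath {E : Finset (Finset V)} {root : Finset V} (D : DBD E root)
    {a b : {f // f ∈ E}} {v : V} (ha : v ∈ a.1) (hb : v ∈ b.1) :
    onTreePath D.J.T ⟨root, D.rootMem⟩ b a ∨ onTreePath D.J.T ⟨root, D.rootMem⟩ a b := by
  rcases eq_or_ne a b with rfl | hab
  · exact Or.inl (onTreePath_refl _ _ _)
  by_contra! h
  have := D.disj a b hab h.1 h.2
  exact Finset.notMem_empty v (this ▸ Finset.mem_inter.2 ⟨ha, hb⟩)

/-- every hypergraph admitting a disjoint branches decomposition is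
β-acyclic: every subhypergraph of it is α-acyclic. -/
theorem stmt12 (E : Finset (Finset V)) (e : Finset V) (h : DbRootable E e)
    (E' : Finset (Finset V)) (V' : Finset V)
    (hsub : ∀ f ∈ E', f ≠ ∅ ∧ ∃ g ∈ E, f = g ∩ V') :
    AlphaAcyclic E' := by
  rcases E'.eq_empty_or_nonempty with rfl | ⟨f₀, hf₀⟩
  · exact Or.inl rfl
  obtain ⟨D⟩ := h
  have : Nonempty {f // f ∈ E'} := ⟨⟨f₀, hf₀⟩⟩
  choose g hgE hg using fun f : {f // f ∈ E'} => (hsub f.1 f.2).2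
  let src : {f // f ∈ E'} → {f // f ∈ E} := fun f => ⟨g f, hgE f⟩
  have hmem (f : {f // f ∈ E'}) (v : V) : v ∈ f.1 ↔ v ∈ (src f).1 ∧ v ∈ V' := by
    rw [hg f, Finset.mem_inter]
  have hsrc : src.Injective := fun a b hab => Subtype.ext <| by
    rw [hg a, hg b, show g a = g b from congrArg Subtype.val hab]
  obtain ⟨T, hT, hconn⟩ :=
    exists_isTree_of_onTreePath D.J.isTree _ hsrc (fun v => {f | v ∈ f.1})
      (fun v x y c hx hy hxc hcy => (hmem c v).2 ⟨mem_of_onTreePath_of_preconnected D.J.isTree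
        (D.J.conn v) ((hmem x v).1 hx).1 ((hmem y v).1 hy).1 hxc hcy, ((hmem x v).1 hx).2⟩)
      (fun v x y hx hy => D.onTreePath_or_onTreePath ((hmem x v).1 hx).1 ((hmem y v).1 hy).1)
  exact Or.inr ⟨⟨T, hT, hconn⟩⟩
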